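/- It is not necessary that the maxi.grounded semantics of a may-must argumentation be a subset of its maxi.complete semantics: there exists a may-must argumentation F whose unique maxi.grounded labelling is not a maximally proper labelling of F. -/

import Mathlib

inductive Lab : Type
  | inn | out | undec
deriving DecidableEq

structure MMA (A : Type) [Fintype A] [DecidableEq A] where
  R : A → A → Prop
  decR : DecidableRel R
  n1 : A → ℕ
  n2 : A → ℕ
  m1 : A → ℕ
  m2 : A → ℕ
  hn : ∀ a, n1 a ≤ n2 a
  hm : ∀ a, m1 a ≤ m2 a

variable {A : Type} [Fintype A] [DecidableEq A]

/-- Number of attackers of `a` labelled `out` by `lam`. -/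
def outCnt (F : MMA A) (lam : A → Lab) (a : A) : ℕ :=
  letI := F.decR
  (Finset.univ.filter (fun b => F.R b a ∧ lam b = Lab.out)).card

/-- Number of attackers of `a` labelled `in` by `lam`. -/
def inCnt (F : MMA A) (lam : A → Lab) (a : A) : ℕ :=
  letI := F.decR
  (Finset.univ.filter (fun b => F.R b a ∧ lam b = Lab.inn)).card

/-- `lam` designates label `l` for argument `a` in `F`. -/
def designates (F : MMA A) (lam : A → Lab) (a : A) : Lab → Prop
  | Lab.inn => F.n1 a ≤ outCnt F lam a ∧ inCnt F lam a < F.m2 a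
  | Lab.out => F.m1 a ≤ inCnt F lam a ∧ outCnt F lam a < F.n2 a
  | Lab.undec =>
      (F.n2 a ≤ outCnt F lam a ∧ F.m2 a ≤ inCnt F lam a) ∨
      (F.n1 a ≤ outCnt F lam a ∧ outCnt F lam a < F.n2 a) ∨
      (F.m1 a ≤ inCnt F lam a ∧ inCnt F lam a < F.m2 a) ∨
      (outCnt F lam a < F.n1 a ∧ inCnt F lam a < F.m1 a)

/-- `a`'s label is proper under `lam`. -/
def proper (F : MMA A) (lam : A → Lab) (a : A) : Prop :=
  designates F lam a (lam a)

/-- Exact labelling: every argument's label is proper. -/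
def exactLab (F : MMA A) (lam : A → Lab) : Prop :=
  ∀ a, proper F lam a

/-- Pre-maximally proper labelling. -/
def preMaxProper (F : MMA A) (lam : A → Lab) : Prop :=
  ∀ a, proper F lam a ∨ lam a = Lab.undec

/-- Maximally proper labelling. -/
def maxProper (F : MMA A) (lam : A → Lab) : Prop :=
  preMaxProper F lam ∧
    ∀ lam', preMaxProper F lam' → ∀ a, proper F lam' a → proper F lam a

/-- The order `⪯` on labellings. -/
def labLE (l1 l2 : A → Lab) : Prop :=
  ∀ a, (l1 a = Lab.inn → l2 a = Lab.inn) ∧ (l1 a = Lab.out → l2 a = Lab.out)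

/-- The maxi.grounded labelling: the meet of the maxi.complete labellings in `(Λ^A, ⪯)`. -/
def maxiGrounded (F : MMA A) (lam : A → Lab) : Prop :=
  (∀ lam' : A → Lab, maxProper F lam' → labLE lam lam') ∧
  (∀ mu : A → Lab, (∀ lam' : A → Lab, maxProper F lam' → labLE mu lam') → labLE mu lam)


/-!
In the chain `a₁ → a₂ → a₃ ← a₄ ← a₅`, the unattacked `a₁` and `a₅` must be `in`, hence `a₄` must be
`out`, while `a₂` may take any label; `a₃` is then `undec` if `a₂` is `in` and `in` otherwise. So there
are exactly three exact labellings. Since an exact labelling exists, maximality forces every maximally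
proper labelling to be exact, and the maxi.grounded labelling is the meet of the three: `a₂` and `a₃`
become `undec`. But with `a₂` undecided and `a₄` out, `a₃` has one `out` and no `in` attacker, which
designates only `in` for it.
-/

instance : Fintype Lab :=
  ⟨{.inn, .out, .undec}, by rintro (_ | _ | _) <;> simp⟩

section Labellings

variable {A : Type}

theorem labLE_antisymm {l1 l2 : A → Lab} (h12 : labLE l1 l2) (h21 : labLE l2 l1) : l1 = l2 := by
  funext a
  obtain ⟨hin, hout⟩ := h12 a
  obtain ⟨hin', hout'⟩ := h21 a
  cases h1 : l1 a <;> cases h2 : l2 a <;> simp_all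

def labMeet (l1 l2 : A → Lab) : A → Lab :=
  fun a => if l1 a = l2 a then l1 a else .undec

theorem labLE_labMeet {mu l1 l2 : A → Lab} (h1 : labLE mu l1) (h2 : labLE mu l2) :
    labLE mu (labMeet l1 l2) := by
  intro a
  obtain ⟨hin1, hout1⟩ := h1 a
  obtain ⟨hin2, hout2⟩ := h2 a
  constructor <;> intro h <;> simp_all [labMeet]

instance [Fintype A] (l1 l2 : A → Lab) : Decidable (labLE l1 l2) := by
  unfold labLE; infer_instance

variable [Fintype A] [DecidableEq A]

instance (F : MMA A) (lam : A → Lab) (a : A) (l : Lab) : Decidable (designates F lam a l) := by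
  cases l <;> unfold designates <;> infer_instance

instance (F : MMA A) (lam : A → Lab) (a : A) : Decidable (proper F lam a) := by
  unfold proper; infer_instance

instance (F : MMA A) (lam : A → Lab) : Decidable (exactLab F lam) := by
  unfold exactLab; infer_instance

theorem maxProper_of_exactLab {F : MMA A} {lam : A → Lab} (h : exactLab F lam) :
    maxProper F lam :=
  ⟨fun a => .inl (h a), fun _ _ a _ => h a⟩

theorem exactLab_of_maxProper {F : MMA A} {lam lam₀ : A → Lab} (h₀ : exactLab F lam₀)
    (h : maxProper F lam) : exactLab F lam :=
  fun a => h.2 lam₀ (fun b => .inl (h₀ b)) a (h₀ a)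

theorem maxiGrounded_unique {F : MMA A} {l1 l2 : A → Lab} (h1 : maxiGrounded F l1)
    (h2 : maxiGrounded F l2) : l1 = l2 :=
  labLE_antisymm (h2.2 l1 h1.1) (h1.2 l2 h2.1)

theorem maxiGrounded_labMeet {F : MMA A} {l1 l2 : A → Lab} (h1 : exactLab F l1)
    (h2 : exactLab F l2) (hle : ∀ lam, exactLab F lam → labLE (labMeet l1 l2) lam) :
    maxiGrounded F (labMeet l1 l2) :=
  ⟨fun _ h => hle _ (exactLab_of_maxProper h1 h),
    fun _ hmu => labLE_labMeet (hmu l1 (maxProper_of_exactLab h1))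
      (hmu l2 (maxProper_of_exactLab h2))⟩

end Labellings

namespace ChainWitness

/-- The chain `a₁ → a₂ → a₃ ← a₄ ← a₅`, with `aᵢ` encoded as `i - 1 : Fin 5`. -/
def F : MMA (Fin 5) where
  R b a := (b.val, a.val) ∈ [(0, 1), (1, 2), (3, 2), (4, 3)]
  decR := fun _ _ => inferInstanceAs (Decidable (_ ∈ _))
  n1 := ![0, 0, 1, 1, 0]
  n2 := ![0, 1, 1, 1, 0]
  m1 := ![1, 1, 1, 1, 1]
  m2 := ![1, 2, 1, 1, 1]
  hn := by decide
  hm := by decide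

def lab (x y : Lab) : Fin 5 → Lab := ![.inn, x, y, .out, .inn]

set_option maxRecDepth 10000 in
theorem exactLab_iff (lam : Fin 5 → Lab) :
    exactLab F lam ↔ lam = lab .inn .undec ∨ lam = lab .out .inn ∨ lam = lab .undec .inn := by
  revert lam
  decide

theorem exactLab_lab_inn_undec : exactLab F (lab .inn .undec) :=
  (exactLab_iff _).2 (.inl rfl)

theorem exactLab_lab_out_inn : exactLab F (lab .out .inn) :=
  (exactLab_iff _).2 (.inr (.inl rfl))

theorem labMeet_labLE_of_exactLab (lam : Fin 5 → Lab) (h : exactLab F lam) :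
    labLE (labMeet (lab .inn .undec) (lab .out .inn)) lam := by
  rcases (exactLab_iff lam).1 h with rfl | rfl | rfl <;> decide

theorem maxiGrounded_labMeet_lab : maxiGrounded F (labMeet (lab .inn .undec) (lab .out .inn)) :=
  maxiGrounded_labMeet exactLab_lab_inn_undec exactLab_lab_out_inn labMeet_labLE_of_exactLab

theorem not_proper_labMeet_lab : ¬ proper F (labMeet (lab .inn .undec) (lab .out .inn)) 2 := by
  decide

end ChainWitness

theorem stmt8 :
    ∃ (n : ℕ) (F : MMA (Fin n)) (lam : Fin n → Lab),
      maxiGrounded F lam ∧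
      (∀ lam' : Fin n → Lab, maxiGrounded F lam' → lam' = lam) ∧
      ¬ maxProper F lam :=
  ⟨5, ChainWitness.F, _,
    ChainWitness.maxiGrounded_labMeet_lab,
    fun _ h => maxiGrounded_unique h ChainWitness.maxiGrounded_labMeet_lab,
    fun h => ChainWitness.not_proper_labMeet_lab
      (exactLab_of_maxProper ChainWitness.exactLab_lab_inn_undec h 2)⟩
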